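/- Fix d ∈ (0,1) and Δ ≥ 0. For all reals ℓ₁, ℓ₂ with 1 ≤ ℓ₁ < ℓ₂, it holds that I(ℓ₁) ≤ I(ℓ₂); that is, the constrained supremum I(ℓ) of the penalized run-length rate h is monotonously non-decreasing in the mean run length ℓ. -/

import Mathlib

/-!
`Rmem d 𝒫` is the mutual information between input and output of the deletion channel
`Ptrans d`. Since the output distribution minimises the average divergence `∑ᵢ 𝒫ᵢ D(Wᵢ ‖ q)`
over all `q`, mutual information is concave in `𝒫`; the penalty is linear, so `h` is concave.
Given `𝒫` of mean `ℓ₁ < ℓ₂`, the mixture `(1 - t) 𝒫 + t δ_M` with `t = (ℓ₂ - ℓ₁) / (M - ℓ₁)`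
has mean `ℓ₂` and `h ≥ (1 - t) h(𝒫) - t Δ dᴹ`, which tends to `h(𝒫)` as `M → ∞`.
The supremum `I(ℓ₂)` is finite because comparing with `qⱼ = 2^-(j+1)` gives
`Rmem d 𝒫 ≤ L(𝒫) + 1`.
-/

/-- A finitely supported probability mass function on the positive integers
(represented as a function on `ℕ` vanishing at `0`). -/
def IsRunPMF (P : ℕ → ℝ) : Prop :=
  (∀ i, 0 ≤ P i) ∧ P 0 = 0 ∧ (Function.support P).Finite ∧ ∑' i : ℕ, P i = 1

/-- `P_{i→j} = C(i,j)·(1−d)^j·d^(i−j)`: the probability that a run of `i` bits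
sent through the binary deletion channel with deletion probability `d` yields
`j` surviving bits (equal to `0` for `j > i`). -/
noncomputable def Ptrans (d : ℝ) (i j : ℕ) : ℝ :=
  (i.choose j : ℝ) * (1 - d) ^ j * d ^ (i - j)

/-- The run-length information rate
`R_mem(𝒫) = Σ_{i,j} 𝒫_i·P_{i→j}·log₂(P_{i→j} / Σ_{i'} 𝒫_{i'}·P_{i'→j})`,
with terms whose numerator vanishes taken to be `0` (they are multiplied by the
vanishing factor `𝒫_i·P_{i→j}`). -/
noncomputable def Rmem (d : ℝ) (P : ℕ → ℝ) : ℝ :=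
  ∑' i : ℕ, ∑' j : ℕ, P i * Ptrans d i j *
    Real.logb 2 (Ptrans d i j / (∑' i' : ℕ, P i' * Ptrans d i' j))

/-- The penalized rate `h(𝒫) = R_mem(𝒫) − Δ·Σ_i 𝒫_i·d^i`. -/
noncomputable def hPen (d Δ : ℝ) (P : ℕ → ℝ) : ℝ :=
  Rmem d P - Δ * ∑' i : ℕ, P i * d ^ i

/-- The mean run length `L(𝒫) = Σ_i i·𝒫_i`. -/
noncomputable def Lmean (P : ℕ → ℝ) : ℝ :=
  ∑' i : ℕ, (i : ℝ) * P i

/-- `I(ℓ)`: the supremum of the penalized rate `h` over finitely supported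
pmfs on the positive integers with mean run length `ℓ`. -/
noncomputable def Isup (d Δ ℓ : ℝ) : ℝ :=
  sSup { r | ∃ P : ℕ → ℝ, IsRunPMF P ∧ Lmean P = ℓ ∧ r = hPen d Δ P }


open Finset Real Filter Topology

noncomputable section MutualInformation

variable {ι κ : Type*} (s : Finset ι) (T : Finset κ) (W : ι → κ → ℝ)

def outDist (p : ι → ℝ) (j : κ) : ℝ :=
  ∑ i ∈ s, p i * W i j

def avgDivergence (p : ι → ℝ) (q : κ → ℝ) : ℝ :=
  ∑ i ∈ s, ∑ j ∈ T, p i * W i j * logb 2 (W i j / q j)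

def mutualInfo (p : ι → ℝ) : ℝ :=
  avgDivergence s T W p (outDist s W p)

variable {s T W}

theorem outDist_nonneg {p : ι → ℝ} (hp : ∀ i ∈ s, 0 ≤ p i) (hW : ∀ i ∈ s, ∀ j ∈ T, 0 ≤ W i j)
    {j : κ} (hj : j ∈ T) : 0 ≤ outDist s W p j :=
  sum_nonneg fun i hi => mul_nonneg (hp i hi) (hW i hi j hj)

theorem outDist_smul_add_smul (p r : ι → ℝ) (a b : ℝ) (j : κ) :
    outDist s W (a • p + b • r) j = a * outDist s W p j + b * outDist s W r j := by
  simp only [outDist, Pi.add_apply, Pi.smul_apply, smul_eq_mul, mul_sum, ← sum_add_distrib]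
  exact sum_congr rfl fun i _ => by ring

theorem sum_outDist (hW1 : ∀ i ∈ s, ∑ j ∈ T, W i j = 1) (p : ι → ℝ) :
    ∑ j ∈ T, outDist s W p j = ∑ i ∈ s, p i := by
  simp only [outDist]
  rw [sum_comm]
  exact sum_congr rfl fun i hi => by rw [← mul_sum, hW1 i hi, mul_one]

theorem avgDivergence_smul_add_smul (p r : ι → ℝ) (q : κ → ℝ) (a b : ℝ) :
    avgDivergence s T W (a • p + b • r) q
      = a * avgDivergence s T W p q + b * avgDivergence s T W r q := by
  simp only [avgDivergence, Pi.add_apply, Pi.smul_apply, smul_eq_mul, mul_sum, ← sum_add_distrib]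
  exact sum_congr rfl fun i _ => sum_congr rfl fun j _ => by ring

theorem gibbs_inequality {p q : κ → ℝ} (hp : ∀ j ∈ T, 0 ≤ p j) (hq : ∀ j ∈ T, 0 ≤ q j)
    (hpq : ∀ j ∈ T, 0 < p j → 0 < q j) (hsum : ∑ j ∈ T, q j ≤ ∑ j ∈ T, p j) :
    0 ≤ ∑ j ∈ T, p j * logb 2 (p j / q j) := by
  have hlog2 : 0 < log 2 := log_pos one_lt_two
  have hterm : ∀ j ∈ T, (p j - q j) / log 2 ≤ p j * logb 2 (p j / q j) := by
    intro j hj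
    rcases (hp j hj).eq_or_lt with h | h
    · rw [← h, zero_sub, zero_mul, neg_div]
      exact neg_nonpos.2 (div_nonneg (hq j hj) hlog2.le)
    · have hlog := one_sub_inv_le_log_of_pos (div_pos h (hpq j hj h))
      rw [inv_div] at hlog
      rw [logb, ← mul_div_assoc, div_le_div_iff_of_pos_right hlog2]
      calc p j - q j = p j * (1 - q j / p j) := by field_simp
        _ ≤ p j * log (p j / q j) := mul_le_mul_of_nonneg_left hlog h.le
  calc (0 : ℝ) ≤ (∑ j ∈ T, p j - ∑ j ∈ T, q j) / log 2 := div_nonneg (by linarith) hlog2.le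
    _ = ∑ j ∈ T, (p j - q j) / log 2 := by rw [← sum_div, sum_sub_distrib]
    _ ≤ _ := sum_le_sum hterm

theorem mutualInfo_le_avgDivergence {p : ι → ℝ} {q : κ → ℝ} (hp : ∀ i ∈ s, 0 ≤ p i)
    (hW : ∀ i ∈ s, ∀ j ∈ T, 0 ≤ W i j) (hW1 : ∀ i ∈ s, ∑ j ∈ T, W i j = 1)
    (hq : ∀ j ∈ T, 0 ≤ q j) (hpos : ∀ j ∈ T, 0 < outDist s W p j → 0 < q j)
    (hsum : ∑ j ∈ T, q j ≤ ∑ i ∈ s, p i) :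
    mutualInfo s T W p ≤ avgDivergence s T W p q := by
  have hsplit : ∀ i ∈ s, ∀ j ∈ T, p i * W i j * logb 2 (W i j / q j)
      = p i * W i j * logb 2 (W i j / outDist s W p j)
        + p i * W i j * logb 2 (outDist s W p j / q j) := by
    intro i hi j hj
    rcases (mul_nonneg (hp i hi) (hW i hi j hj)).eq_or_lt with h | h
    · simp [← h]
    · have hQ : 0 < outDist s W p j := h.trans_le <|
        single_le_sum (fun i' hi' => mul_nonneg (hp i' hi') (hW i' hi' j hj)) hi
      have hWij : 0 < W i j := pos_of_mul_pos_right h (hp i hi)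
      have hqj := hpos j hj hQ
      rw [logb_div hWij.ne' hqj.ne', logb_div hWij.ne' hQ.ne', logb_div hQ.ne' hqj.ne']
      ring
  have hgibbs := gibbs_inequality (fun j hj => outDist_nonneg hp hW hj) hq hpos
    (by rwa [sum_outDist hW1])
  have hregroup : ∑ j ∈ T, outDist s W p j * logb 2 (outDist s W p j / q j)
      = ∑ i ∈ s, ∑ j ∈ T, p i * W i j * logb 2 (outDist s W p j / q j) := by
    rw [sum_comm]
    exact sum_congr rfl fun j _ => sum_mul _ _ _
  calc mutualInfo s T W p
      ≤ mutualInfo s T W p + ∑ j ∈ T, outDist s W p j * logb 2 (outDist s W p j / q j) :=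
        le_add_of_nonneg_right hgibbs
    _ = avgDivergence s T W p q := by
      rw [mutualInfo, avgDivergence, avgDivergence, hregroup, ← sum_add_distrib]
      exact sum_congr rfl fun i hi => by
        rw [← sum_add_distrib]; exact sum_congr rfl fun j hj => (hsplit i hi j hj).symm

theorem mutualInfo_concave {p r : ι → ℝ} {t : ℝ} (hp : ∀ i ∈ s, 0 ≤ p i) (hr : ∀ i ∈ s, 0 ≤ r i)
    (hp1 : ∑ i ∈ s, p i = 1) (hr1 : ∑ i ∈ s, r i = 1)
    (hW : ∀ i ∈ s, ∀ j ∈ T, 0 ≤ W i j) (hW1 : ∀ i ∈ s, ∑ j ∈ T, W i j = 1)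
    (ht₀ : 0 < t) (ht₁ : t < 1) :
    (1 - t) * mutualInfo s T W p + t * mutualInfo s T W r
      ≤ mutualInfo s T W ((1 - t) • p + t • r) := by
  set Q := outDist s W ((1 - t) • p + t • r)
  have hQ : ∀ j, Q j = (1 - t) * outDist s W p j + t * outDist s W r j :=
    outDist_smul_add_smul p r _ _
  have hQ_nonneg : ∀ j ∈ T, 0 ≤ Q j := fun j hj => by
    rw [hQ]
    have := outDist_nonneg hp hW hj
    have := outDist_nonneg hr hW hj
    have := sub_pos.2 ht₁
    positivity
  have hQ_sum : ∑ j ∈ T, Q j = 1 := by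
    simp [Q, sum_outDist hW1, sum_add_distrib, ← mul_sum, hp1, hr1]
  calc (1 - t) * mutualInfo s T W p + t * mutualInfo s T W r
      ≤ (1 - t) * avgDivergence s T W p Q + t * avgDivergence s T W r Q := by
        gcongr
        · refine mutualInfo_le_avgDivergence hp hW hW1 hQ_nonneg (fun j hj h => ?_)
            (by rw [hQ_sum, hp1])
          rw [hQ]
          exact add_pos_of_pos_of_nonneg (mul_pos (sub_pos.2 ht₁) h)
            (mul_nonneg ht₀.le (outDist_nonneg hr hW hj))
        · refine mutualInfo_le_avgDivergence hr hW hW1 hQ_nonneg (fun j hj h => ?_)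
            (by rw [hQ_sum, hr1])
          rw [hQ]
          exact add_pos_of_nonneg_of_pos (mul_nonneg (sub_pos.2 ht₁).le
            (outDist_nonneg hp hW hj)) (mul_pos ht₀ h)
    _ = mutualInfo s T W ((1 - t) • p + t • r) := (avgDivergence_smul_add_smul p r Q _ _).symm

end MutualInformation

section RunLength

variable {d : ℝ}

theorem ptrans_eq_zero_of_lt {i j : ℕ} (h : i < j) : Ptrans d i j = 0 := by
  simp [Ptrans, Nat.choose_eq_zero_of_lt h]

theorem ptrans_nonneg (hd₀ : 0 ≤ d) (hd₁ : d ≤ 1) (i j : ℕ) : 0 ≤ Ptrans d i j := by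
  have := sub_nonneg.2 hd₁
  unfold Ptrans
  positivity

theorem sum_ptrans {i N : ℕ} (h : i < N) : ∑ j ∈ range N, Ptrans d i j = 1 := by
  calc ∑ j ∈ range N, Ptrans d i j = ∑ j ∈ range (i + 1), Ptrans d i j :=
        (sum_subset (range_subset_range.2 h) fun j _ hj =>
          ptrans_eq_zero_of_lt (by simpa using hj)).symm
    _ = (1 - d + d) ^ i := by
        rw [add_pow]
        exact sum_congr rfl fun j _ => by unfold Ptrans; ring
    _ = 1 := by simp

theorem rmem_eq_mutualInfo {P : ℕ → ℝ} {N : ℕ} (hP : ∀ i ∉ range N, P i = 0) :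
    Rmem d P = mutualInfo (range N) (range N) (Ptrans d) P := by
  have hout : ∀ j, ∑' i, P i * Ptrans d i j = outDist (range N) (Ptrans d) P j := fun j =>
    tsum_eq_sum fun i hi => by simp [hP i hi]
  unfold Rmem
  rw [tsum_eq_sum (s := range N) fun i hi => by simp [hP i hi]]
  refine sum_congr rfl fun i hi => ?_
  rw [tsum_eq_sum (s := range N) fun j hj => by
    rw [ptrans_eq_zero_of_lt (by simp at hi hj; omega)]; simp]
  simp only [hout]

theorem eventually_eq_zero_outside_range {P : ℕ → ℝ} (hP : (Function.support P).Finite) :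
    ∀ᶠ N in atTop, ∀ i ∉ range N, P i = 0 := by
  obtain ⟨N₀, hN₀⟩ := exists_nat_subset_range hP.toFinset
  filter_upwards [eventually_ge_atTop N₀] with N hN i hi
  by_contra h
  exact hi (range_subset_range.2 hN (hN₀ (by simpa using h)))

theorem tsum_mul_smul_add_smul {P Q : ℕ → ℝ} (hP : (Function.support P).Finite)
    (hQ : (Function.support Q).Finite) (g : ℕ → ℝ) (a b : ℝ) :
    ∑' i, g i * (a • P + b • Q) i = a * ∑' i, g i * P i + b * ∑' i, g i * Q i := by
  obtain ⟨N, hPN, hQN⟩ :=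
    ((eventually_eq_zero_outside_range hP).and (eventually_eq_zero_outside_range hQ)).exists
  rw [tsum_eq_sum (s := range N) fun i hi => by simp [hPN i hi, hQN i hi],
    tsum_eq_sum (s := range N) fun i hi => by simp [hPN i hi],
    tsum_eq_sum (s := range N) fun i hi => by simp [hQN i hi]]
  simp only [Pi.add_apply, Pi.smul_apply, smul_eq_mul, mul_sum, ← sum_add_distrib]
  exact sum_congr rfl fun i _ => by ring

namespace IsRunPMF

variable {P Q : ℕ → ℝ}

theorem sum_range (hP : IsRunPMF P) {N : ℕ} (hN : ∀ i ∉ range N, P i = 0) :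
    ∑ i ∈ range N, P i = 1 :=
  (tsum_eq_sum hN).symm.trans hP.2.2.2

theorem smul_add_smul (hP : IsRunPMF P) (hQ : IsRunPMF Q) {t : ℝ} (ht₀ : 0 ≤ t) (ht₁ : t ≤ 1) :
    IsRunPMF ((1 - t) • P + t • Q) := by
  have := sub_nonneg.2 ht₁
  refine ⟨fun i => ?_, by simp [hP.2.1, hQ.2.1],
    (hP.2.2.1.union hQ.2.2.1).subset ((Function.support_add _ _).trans
      (Set.union_subset_union (Function.support_smul_subset_right _ _)
        (Function.support_smul_subset_right _ _))), ?_⟩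
  · have := hP.1 i
    have := hQ.1 i
    simp only [Pi.add_apply, Pi.smul_apply, smul_eq_mul]
    positivity
  · simpa [hP.2.2.2, hQ.2.2.2] using
      tsum_mul_smul_add_smul hP.2.2.1 hQ.2.2.1 (fun _ => 1) (1 - t) t

end IsRunPMF

theorem isRunPMF_single {M : ℕ} (hM : 0 < M) : IsRunPMF (Pi.single M 1) :=
  ⟨fun i => by by_cases h : i = M <;> simp [h], by simp [hM.ne],
    (Set.finite_singleton M).subset Pi.support_single_subset, tsum_pi_single M 1⟩

theorem lmean_smul_add_smul {P Q : ℕ → ℝ} (hP : IsRunPMF P) (hQ : IsRunPMF Q) (a b : ℝ) :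
    Lmean (a • P + b • Q) = a * Lmean P + b * Lmean Q :=
  tsum_mul_smul_add_smul hP.2.2.1 hQ.2.2.1 _ a b

theorem lmean_single (M : ℕ) : Lmean (Pi.single M 1) = M := by
  simp [Lmean, Pi.single_apply]

theorem rmem_single (M : ℕ) : Rmem d (Pi.single M 1) = 0 := by
  have hself : ∀ x : ℝ, x * logb 2 (x / x) = 0 := fun x => by
    rcases eq_or_ne x 0 with rfl | h <;> simp [*]
  unfold Rmem
  rw [tsum_eq_single M fun i hi => by simp [hi]]
  simp [Pi.single_apply, hself]

theorem hPen_single (Δ : ℝ) (M : ℕ) : hPen d Δ (Pi.single M 1) = -(Δ * d ^ M) := by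
  simp [hPen, rmem_single, Pi.single_apply]

theorem rmem_concave (hd₀ : 0 ≤ d) (hd₁ : d ≤ 1) {P Q : ℕ → ℝ} (hP : IsRunPMF P)
    (hQ : IsRunPMF Q) {t : ℝ} (ht₀ : 0 < t) (ht₁ : t < 1) :
    (1 - t) * Rmem d P + t * Rmem d Q ≤ Rmem d ((1 - t) • P + t • Q) := by
  obtain ⟨N, hPN, hQN⟩ := ((eventually_eq_zero_outside_range hP.2.2.1).and
    (eventually_eq_zero_outside_range hQ.2.2.1)).exists
  rw [rmem_eq_mutualInfo hPN, rmem_eq_mutualInfo hQN,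
    rmem_eq_mutualInfo fun i hi => by simp [hPN i hi, hQN i hi]]
  exact mutualInfo_concave (fun i _ => hP.1 i) (fun i _ => hQ.1 i) (hP.sum_range hPN)
    (hQ.sum_range hQN) (fun i _ j _ => ptrans_nonneg hd₀ hd₁ i j)
    (fun i hi => sum_ptrans (mem_range.1 hi)) ht₀ ht₁

theorem hPen_concave (hd₀ : 0 ≤ d) (hd₁ : d ≤ 1) (Δ : ℝ) {P Q : ℕ → ℝ} (hP : IsRunPMF P)
    (hQ : IsRunPMF Q) {t : ℝ} (ht₀ : 0 < t) (ht₁ : t < 1) :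
    (1 - t) * hPen d Δ P + t * hPen d Δ Q ≤ hPen d Δ ((1 - t) • P + t • Q) := by
  have hpen := tsum_mul_smul_add_smul hP.2.2.1 hQ.2.2.1 (d ^ ·) (1 - t) t
  simp only [mul_comm (d ^ _)] at hpen
  simp only [hPen, hpen]
  linear_combination rmem_concave hd₀ hd₁ hP hQ ht₀ ht₁

theorem rmem_le_lmean_add_one (hd₀ : 0 ≤ d) (hd₁ : d ≤ 1) {P : ℕ → ℝ} (hP : IsRunPMF P) :
    Rmem d P ≤ Lmean P + 1 := by
  obtain ⟨N, hN⟩ := (eventually_eq_zero_outside_range hP.2.2.1).exists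
  have hterm : ∀ i ∈ range N, ∀ j ∈ range N,
      P i * Ptrans d i j * logb 2 (Ptrans d i j / (2 ^ (j + 1))⁻¹)
        ≤ P i * Ptrans d i j * (i + 1) := by
    intro i _ j _
    rcases (ptrans_nonneg hd₀ hd₁ i j).eq_or_lt with h | h
    · simp [← h]
    have hji : j ≤ i := not_lt.1 fun hij => h.ne' (ptrans_eq_zero_of_lt hij)
    have hle : Ptrans d i j ≤ 1 := sum_ptrans (d := d) (Nat.lt_succ_self i) ▸
      single_le_sum (fun k _ => ptrans_nonneg hd₀ hd₁ i k) (mem_range.2 (Nat.lt_succ_of_le hji))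
    refine mul_le_mul_of_nonneg_left ?_ (mul_nonneg (hP.1 i) h.le)
    rw [div_inv_eq_mul, logb_mul h.ne' (by positivity), logb_pow,
      logb_self_eq_one one_lt_two, mul_one]
    have := logb_nonpos one_lt_two h.le hle
    have : (j : ℝ) ≤ i := by exact_mod_cast hji
    push_cast
    linarith
  have hgeom : ∑ j ∈ range N, ((2 : ℝ) ^ (j + 1))⁻¹ ≤ ∑ i ∈ range N, P i := by
    rw [hP.sum_range hN]
    have := sum_geometric_two_le N
    simp only [pow_succ, mul_inv, ← sum_mul, one_div, inv_pow] at this ⊢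
    linarith
  calc Rmem d P = mutualInfo (range N) (range N) (Ptrans d) P := rmem_eq_mutualInfo hN
    _ ≤ avgDivergence (range N) (range N) (Ptrans d) P (fun j => (2 ^ (j + 1))⁻¹) :=
        mutualInfo_le_avgDivergence (fun i _ => hP.1 i) (fun i _ j _ => ptrans_nonneg hd₀ hd₁ i j)
          (fun i hi => sum_ptrans (mem_range.1 hi)) (fun j _ => by positivity)
          (fun j _ _ => by positivity) hgeom
    _ ≤ ∑ i ∈ range N, ∑ j ∈ range N, P i * Ptrans d i j * (i + 1) :=
        sum_le_sum fun i hi => sum_le_sum fun j hj => hterm i hi j hj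
    _ = ∑ i ∈ range N, ((i : ℝ) * P i + P i) := sum_congr rfl fun i hi => by
        rw [← sum_mul, ← mul_sum, sum_ptrans (mem_range.1 hi)]
        ring
    _ = Lmean P + 1 := by
        rw [sum_add_distrib, hP.sum_range hN, Lmean,
          tsum_eq_sum (s := range N) fun i hi => by simp [hN i hi]]

theorem hPen_le_lmean_add_one (hd₀ : 0 ≤ d) (hd₁ : d ≤ 1) {Δ : ℝ} (hΔ : 0 ≤ Δ) {P : ℕ → ℝ}
    (hP : IsRunPMF P) : hPen d Δ P ≤ Lmean P + 1 := by
  have : 0 ≤ Δ * ∑' i, P i * d ^ i :=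
    mul_nonneg hΔ (tsum_nonneg fun i => mul_nonneg (hP.1 i) (pow_nonneg hd₀ i))
  unfold hPen
  linarith [rmem_le_lmean_add_one hd₀ hd₁ hP]

end RunLength

theorem exists_isRunPMF_lmean_eq {ℓ : ℝ} (hℓ : 1 ≤ ℓ) : ∃ P, IsRunPMF P ∧ Lmean P = ℓ := by
  set n := ⌊ℓ⌋₊ + 1
  have hn : 1 < n := Nat.lt_succ_of_le ((Nat.one_le_floor_iff ℓ).2 hℓ)
  have hℓn : ℓ < n := by simpa [n] using Nat.lt_floor_add_one ℓ
  have hn1 : (0 : ℝ) < n - 1 := by linarith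
  set t := (ℓ - 1) / (n - 1)
  have ht₀ : 0 ≤ t := div_nonneg (by linarith) hn1.le
  have ht₁ : t ≤ 1 := (div_le_one hn1).2 (by linarith)
  refine ⟨(1 - t) • Pi.single 1 1 + t • Pi.single n 1,
    (isRunPMF_single one_pos).smul_add_smul (isRunPMF_single (by omega)) ht₀ ht₁, ?_⟩
  rw [lmean_smul_add_smul (isRunPMF_single one_pos) (isRunPMF_single (by omega)),
    lmean_single, lmean_single]
  simp only [t]
  field_simp
  ring

theorem bddAbove_hPen_of_lmean_eq {d Δ : ℝ} (hd₀ : 0 ≤ d) (hd₁ : d ≤ 1) (hΔ : 0 ≤ Δ) (ℓ : ℝ) :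
    BddAbove {r | ∃ P : ℕ → ℝ, IsRunPMF P ∧ Lmean P = ℓ ∧ r = hPen d Δ P} :=
  ⟨ℓ + 1, by rintro _ ⟨P, hP, rfl, rfl⟩; exact hPen_le_lmean_add_one hd₀ hd₁ hΔ hP⟩

theorem hPen_le_isup_of_lmean_lt {d Δ ℓ : ℝ} (hd₀ : 0 ≤ d) (hd₁ : d < 1) (hΔ : 0 ≤ Δ)
    {P : ℕ → ℝ} (hP : IsRunPMF P) (hℓ : Lmean P < ℓ) : hPen d Δ P ≤ Isup d Δ ℓ := by
  set t : ℕ → ℝ := fun M => (ℓ - Lmean P) / (M - Lmean P)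
  have ht : Tendsto t atTop (𝓝 0) := tendsto_const_nhds.div_atTop <| by
    simpa only [← sub_eq_add_neg] using
      tendsto_atTop_add_const_right _ (-Lmean P) tendsto_natCast_atTop_atTop
  have hlim : Tendsto (fun M : ℕ => (1 - t M) * hPen d Δ P + t M * -(Δ * d ^ M)) atTop
      (𝓝 (hPen d Δ P)) := by
    simpa using (((tendsto_const_nhds (x := (1 : ℝ))).sub ht).mul
      (tendsto_const_nhds (x := hPen d Δ P))).add
      (ht.mul ((tendsto_pow_atTop_nhds_zero_of_lt_one hd₀ hd₁).const_mul Δ).neg)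
  refine le_of_tendsto hlim (eventually_atTop.2 ⟨⌊ℓ⌋₊ + 1, fun M hM => ?_⟩)
  have hMℓ : ℓ < M := (Nat.lt_floor_add_one ℓ).trans_le (by exact_mod_cast hM)
  have hM : 0 < M := by omega
  have hML : 0 < (M : ℝ) - Lmean P := by linarith
  have ht₀ : 0 < t M := div_pos (by linarith) hML
  have ht₁ : t M < 1 := (div_lt_one hML).2 (by linarith)
  have hmix := hP.smul_add_smul (isRunPMF_single hM) ht₀.le ht₁.le
  have hmean : Lmean ((1 - t M) • P + t M • Pi.single M 1) = ℓ := by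
    rw [lmean_smul_add_smul hP (isRunPMF_single hM), lmean_single]
    simp only [t]
    field_simp
    ring
  calc (1 - t M) * hPen d Δ P + t M * -(Δ * d ^ M)
      = (1 - t M) * hPen d Δ P + t M * hPen d Δ (Pi.single M 1) := by rw [hPen_single]
    _ ≤ hPen d Δ ((1 - t M) • P + t M • Pi.single M 1) :=
        hPen_concave hd₀ hd₁.le Δ hP (isRunPMF_single hM) ht₀ ht₁
    _ ≤ Isup d Δ ℓ := le_csSup (bddAbove_hPen_of_lmean_eq hd₀ hd₁.le hΔ ℓ) ⟨_, hmix, hmean, rfl⟩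

/-- For `d ∈ (0,1)`, `Δ ≥ 0` and `1 ≤ ℓ₁ < ℓ₂`, the constrained
supremum `I(ℓ)` of the penalized rate is non-decreasing: `I(ℓ₁) ≤ I(ℓ₂)`. -/
theorem Isup_mono (d Δ : ℝ) (hd₀ : 0 < d) (hd₁ : d < 1) (hΔ : 0 ≤ Δ)
    (ℓ₁ ℓ₂ : ℝ) (hℓ₁ : 1 ≤ ℓ₁) (hℓ₁₂ : ℓ₁ < ℓ₂) :
    Isup d Δ ℓ₁ ≤ Isup d Δ ℓ₂ := by
  obtain ⟨P₀, hP₀, hL₀⟩ := exists_isRunPMF_lmean_eq hℓ₁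
  refine csSup_le ⟨_, P₀, hP₀, hL₀, rfl⟩ ?_
  rintro _ ⟨P, hP, rfl, rfl⟩
  exact hPen_le_isup_of_lmean_lt hd₀.le hd₁ hΔ hP hℓ₁₂
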